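/- arXiv:2309.16213 — 4 statements merged into one kernel-verified Lean document; each statement's English description precedes it below -/
import Mathlib

section
/- For μ₁, μ₂ ∈ {+1, -1} and the phase Φ_{μ₁μ₂}(ξ₁,ξ₂) = -Λ(ξ₁+ξ₂) + μ₁Λ(ξ₁) + μ₂Λ(ξ₂) with Λ(ξ)=√(1+ξ²), the phase never vanishes: for all ξ₁, ξ₂ ∈ ℝ, Φ_{μ₁μ₂}(ξ₁,ξ₂) ≠ 0. -/
/-!
Λ is strictly subadditive: by Cauchy–Schwarz, Λ(a)Λ(b) ≥ 1 + ab, so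
(Λ(a) + Λ(b))² ≥ 4 + (a + b)² > Λ(a + b)². Each sign pattern with one minus sign is this
inequality applied to a suitable decomposition (e.g. ξ₁ = (ξ₁ + ξ₂) + (-ξ₂)), and with two
minus signs the phase is a sum of negative terms.
-/

/-- Λ(ξ) = √(1+ξ²) -/
noncomputable def Lam (ξ : ℝ) : ℝ := Real.sqrt (1 + ξ ^ 2)

lemma lam_sq (ξ : ℝ) : Lam ξ ^ 2 = 1 + ξ ^ 2 :=
  Real.sq_sqrt (by positivity)

lemma lam_pos (ξ : ℝ) : 0 < Lam ξ :=
  Real.sqrt_pos.2 (by positivity)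

lemma lam_neg (ξ : ℝ) : Lam (-ξ) = Lam ξ := by
  rw [Lam, Lam, neg_sq]

lemma one_add_mul_le_lam_mul_lam (a b : ℝ) : 1 + a * b ≤ Lam a * Lam b := by
  rw [Lam, Lam, ← Real.sqrt_mul (by positivity)]
  refine (le_abs_self _).trans (Real.abs_le_sqrt ?_)
  nlinarith [sq_nonneg (a - b)]

lemma lam_add_lt (a b : ℝ) : Lam (a + b) < Lam a + Lam b := by
  refine lt_of_pow_lt_pow_left₀ 2 (add_pos (lam_pos a) (lam_pos b)).le ?_
  calc Lam (a + b) ^ 2 = 1 + (a + b) ^ 2 := lam_sq _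
    _ < 4 + (a + b) ^ 2 := by linarith
    _ = 2 + a ^ 2 + b ^ 2 + 2 * (1 + a * b) := by ring
    _ ≤ Lam a ^ 2 + Lam b ^ 2 + 2 * (Lam a * Lam b) := by
        rw [lam_sq, lam_sq]; linarith [one_add_mul_le_lam_mul_lam a b]
    _ = (Lam a + Lam b) ^ 2 := by ring

/-- The quadratic phase Φ_{μ₁μ₂}(ξ₁,ξ₂) = -Λ(ξ₁+ξ₂) + μ₁Λ(ξ₁) + μ₂Λ(ξ₂) never vanishes. -/
theorem two_phase_ne_zero (μ₁ μ₂ : ℝ) (hμ₁ : μ₁ = 1 ∨ μ₁ = -1) (hμ₂ : μ₂ = 1 ∨ μ₂ = -1)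
    (ξ₁ ξ₂ : ℝ) :
    -Lam (ξ₁ + ξ₂) + μ₁ * Lam ξ₁ + μ₂ * Lam ξ₂ ≠ 0 := by
  rcases hμ₁ with rfl | rfl <;> rcases hμ₂ with rfl | rfl
  · have := lam_add_lt ξ₁ ξ₂
    exact ne_of_gt (by linarith)
  · have := lam_add_lt (ξ₁ + ξ₂) (-ξ₂)
    rw [add_neg_cancel_right, lam_neg] at this
    exact ne_of_lt (by linarith)
  · have := lam_add_lt (-ξ₁) (ξ₁ + ξ₂)
    rw [neg_add_cancel_left, lam_neg] at this
    exact ne_of_lt (by linarith)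
  · have := lam_pos ξ₁
    have := lam_pos ξ₂
    have := lam_pos (ξ₁ + ξ₂)
    exact ne_of_lt (by linarith)
end

section
/- If |ξ₁| ≈ 2^{k₁}, |ξ₂| ≈ 2^{k₂}, |ξ₃| ≈ 2^{k₃} and max{k₁,k₂} ≤ k₃ - O(1) with O(1) large enough, then |Φ_{++-}(ξ₁,ξ₂,ξ₃)| = |-Λ(ξ₁+ξ₂+ξ₃) + Λ(ξ₁) + Λ(ξ₂) - Λ(ξ₃)| ≥ Λ(ξ₃)/2. Concretely: there exists C₀ > 0 such that if Λ(ξ₁) + Λ(ξ₂) ≤ Λ(ξ₃)/C₀ then |Λ(ξ₁) + Λ(ξ₂) - Λ(ξ₃) - Λ(ξ₁+ξ₂+ξ₃)| ≥ Λ(ξ₃)/2. -/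
/-! Λ(ξ) is the Euclidean norm of (1, ξ), hence 1-Lipschitz, so
Λ(ξ₁+ξ₂+ξ₃) ≥ Λ(ξ₃) − |ξ₁+ξ₂| ≥ Λ(ξ₃) − Λ(ξ₁) − Λ(ξ₂). With C₀ = 2 the phase
Λ(ξ₃) + Λ(ξ₁+ξ₂+ξ₃) − Λ(ξ₁) − Λ(ξ₂) is then at least Λ(ξ₃). -/

open Complex

lemma lam_eq_norm (ξ : ℝ) : Lam ξ = ‖(⟨1, ξ⟩ : ℂ)‖ := by
  rw [Lam, norm_eq_sqrt_sq_add_sq, one_pow]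

lemma abs_le_lam (ξ : ℝ) : |ξ| ≤ Lam ξ := by
  simpa only [lam_eq_norm] using abs_im_le_norm (⟨1, ξ⟩ : ℂ)

lemma lam_sub_lam_le (x y : ℝ) : Lam x - Lam y ≤ |x - y| := by
  have hdist : ‖(⟨1, x⟩ : ℂ) - ⟨1, y⟩‖ = |x - y| := by
    rw [← dist_eq_norm]
    exact dist_of_re_eq rfl
  simpa only [lam_eq_norm, hdist] using norm_sub_norm_le (⟨1, x⟩ : ℂ) ⟨1, y⟩

/-- Lower bound for the bad phase Φ_{++-} in the low-low-high regime:
    there exists C₀ > 0 such that if Λ(ξ₁) + Λ(ξ₂) ≤ Λ(ξ₃)/C₀ then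
    |Λ(ξ₁) + Λ(ξ₂) - Λ(ξ₃) - Λ(ξ₁+ξ₂+ξ₃)| ≥ Λ(ξ₃)/2. -/
theorem bad_phase_lower_bound :
    ∃ C₀ : ℝ, 0 < C₀ ∧ ∀ ξ₁ ξ₂ ξ₃ : ℝ,
      Lam ξ₁ + Lam ξ₂ ≤ Lam ξ₃ / C₀ →
      |Lam ξ₁ + Lam ξ₂ - Lam ξ₃ - Lam (ξ₁ + ξ₂ + ξ₃)| ≥ Lam ξ₃ / 2 := by
  refine ⟨2, two_pos, fun ξ₁ ξ₂ ξ₃ hlow => ?_⟩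
  have hshift : Lam ξ₃ - Lam (ξ₁ + ξ₂ + ξ₃) ≤ |ξ₁ + ξ₂| := by
    simpa only [sub_add_cancel_right, abs_neg] using lam_sub_lam_le ξ₃ (ξ₁ + ξ₂ + ξ₃)
  have hsum : |ξ₁ + ξ₂| ≤ Lam ξ₁ + Lam ξ₂ :=
    (abs_add_le ξ₁ ξ₂).trans (add_le_add (abs_le_lam ξ₁) (abs_le_lam ξ₂))
  rw [ge_iff_le, abs_sub_comm, le_abs]
  left
  linarith [(abs_nonneg ξ₃).trans (abs_le_lam ξ₃)]
end

section
/- Let K : ℝ³ → ℂ be integrable and f₁ ∈ L^{q₁}(ℝ), f₂ ∈ L^{q₂}(ℝ), f₃ ∈ L^{q₃}(ℝ) with 1/p = 1/q₁ + 1/q₂ + 1/q₃, all exponents in [1,∞]. Then x ↦ ∭ K(x-x₁, x-x₂, x-x₃) f₁(x₁) f₂(x₂) f₃(x₃) dx₁dx₂dx₃ lies in L^p(ℝ) with norm at most ‖K‖_{L¹(ℝ³)} ‖f₁‖_{L^{q₁}} ‖f₂‖_{L^{q₂}} ‖f₃‖_{L^{q₃}}. -/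
/-!
Substituting `zᵢ = x - xᵢ` writes the operator as `x ↦ ∫ K(z) F_z(x) dz` with
`F_z(x) = f₁(x - z₁) f₂(x - z₂) f₃(x - z₃)`. Hölder's inequality and translation invariance give
`‖F_z‖_p ≤ ‖f₁‖_{q₁} ‖f₂‖_{q₂} ‖f₃‖_{q₃}` uniformly in `z`, and Minkowski's integral inequality
for the weight `|K|` then bounds the `L^p` norm of the majorant `x ↦ ∫ |K(z)| |F_z(x)| dz` by
`‖K‖₁` times this constant. In particular the majorant is finite a.e., so by Fubini the iterated
integral agrees a.e. with the integral over `ℝ³`.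
-/

open MeasureTheory Function
open scoped ENNReal

section Holder
variable {α 𝕜 : Type*} [MeasurableSpace α] {μ : Measure α} [NormedRing 𝕜]

theorem eLpNorm_mul_le_mul_eLpNorm {f g : α → 𝕜} (hf : AEStronglyMeasurable f μ)
    (hg : AEStronglyMeasurable g μ) {p q r : ℝ≥0∞} [ENNReal.HolderTriple p q r] :
    eLpNorm (fun x => f x * g x) r μ ≤ eLpNorm f p μ * eLpNorm g q μ := by
  simpa using eLpNorm_le_eLpNorm_mul_eLpNorm_of_nnnorm hf hg (· * ·) 1
    (.of_forall fun x => by simpa using nnnorm_mul_le (f x) (g x))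

theorem eLpNorm_mul_mul_le_mul_eLpNorm {f g h : α → 𝕜} (hf : AEStronglyMeasurable f μ)
    (hg : AEStronglyMeasurable g μ) (hh : AEStronglyMeasurable h μ)
    {p q₁ q₂ q₃ : ℝ≥0∞} (hpq : 1 / p = 1 / q₁ + 1 / q₂ + 1 / q₃) :
    eLpNorm (fun x => f x * g x * h x) p μ ≤
      eLpNorm f q₁ μ * eLpNorm g q₂ μ * eLpNorm h q₃ μ := by
  simp only [one_div] at hpq
  have : ENNReal.HolderTriple q₁ q₂ (q₁⁻¹ + q₂⁻¹)⁻¹ := ⟨by rw [inv_inv]⟩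
  have : ENNReal.HolderTriple (q₁⁻¹ + q₂⁻¹)⁻¹ q₃ p := ⟨by rw [inv_inv, hpq]⟩
  calc _ ≤ eLpNorm (fun x => f x * g x) (q₁⁻¹ + q₂⁻¹)⁻¹ μ * eLpNorm h q₃ μ :=
        eLpNorm_mul_le_mul_eLpNorm (hf.mul hg) hh
    _ ≤ _ := mul_le_mul_left (eLpNorm_mul_le_mul_eLpNorm hf hg) _

end Holder

section WeightedMinkowski

variable {α β : Type*} [MeasurableSpace α] [MeasurableSpace β] {μ : Measure α} {ν : Measure β}

/-- Jensen's inequality for the measure `w • ν`, via Hölder with exponents `1 - 1/r` and `1/r`. -/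
theorem ENNReal.rpow_lintegral_mul_le {w g : β → ℝ≥0∞} (hw : AEMeasurable w ν)
    (hg : AEMeasurable g ν) {r : ℝ} (hr : 1 ≤ r) :
    (∫⁻ z, w z * g z ∂ν) ^ r ≤ (∫⁻ z, w z ∂ν) ^ (r - 1) * ∫⁻ z, w z * g z ^ r ∂ν := by
  have hr₀ : 0 < r := zero_lt_one.trans_le hr
  have hsplit : ∀ z, w z * g z = w z ^ (1 - r⁻¹) * (w z * g z ^ r) ^ r⁻¹ := fun z => by
    rw [ENNReal.mul_rpow_of_nonneg _ _ (by positivity), ENNReal.rpow_rpow_inv hr₀.ne',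
      ← mul_assoc, ← ENNReal.rpow_add_of_nonneg _ _ (by simpa using inv_le_one_of_one_le₀ hr)
        (by positivity), sub_add_cancel, ENNReal.rpow_one]
  have holder : ∫⁻ z, w z ^ (1 - r⁻¹) * (w z * g z ^ r) ^ r⁻¹ ∂ν ≤
      (∫⁻ z, w z ∂ν) ^ (1 - r⁻¹) * (∫⁻ z, w z * g z ^ r ∂ν) ^ r⁻¹ :=
    ENNReal.lintegral_mul_norm_pow_le hw (hw.mul (hg.pow_const r))
      (by simpa using inv_le_one_of_one_le₀ hr) (inv_nonneg.2 hr₀.le) (sub_add_cancel 1 r⁻¹)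
  rw [← lintegral_congr hsplit] at holder
  calc (∫⁻ z, w z * g z ∂ν) ^ r
      ≤ ((∫⁻ z, w z ∂ν) ^ (1 - r⁻¹) * (∫⁻ z, w z * g z ^ r ∂ν) ^ r⁻¹) ^ r :=
        ENNReal.rpow_le_rpow holder hr₀.le
    _ = (∫⁻ z, w z ∂ν) ^ (r - 1) * ∫⁻ z, w z * g z ^ r ∂ν := by
        rw [ENNReal.mul_rpow_of_nonneg _ _ hr₀.le, ← ENNReal.rpow_mul,
          ENNReal.rpow_inv_rpow hr₀.ne', sub_mul, one_mul, inv_mul_cancel₀ hr₀.ne']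

theorem aemeasurable_uncurry_mul_swap [SFinite ν] {w : β → ℝ≥0∞} (hw : AEMeasurable w ν)
    {h : β → α → ℝ≥0∞} (hh : Measurable (uncurry h)) :
    AEMeasurable (uncurry fun x z => w z * h z x) (μ.prod ν) :=
  (hw.comp_quasiMeasurePreserving Measure.quasiMeasurePreserving_snd).mul
    (hh.comp measurable_swap).aemeasurable

theorem lintegral_rpow_lintegral_mul_le [SFinite μ] [SFinite ν] {w : β → ℝ≥0∞}
    (hw : AEMeasurable w ν) {h : β → α → ℝ≥0∞} (hh : Measurable (uncurry h)) {r : ℝ}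
    (hr : 1 ≤ r) {M : ℝ≥0∞} (hM : ∀ z, ∫⁻ x, h z x ^ r ∂μ ≤ M) :
    ∫⁻ x, (∫⁻ z, w z * h z x ∂ν) ^ r ∂μ ≤ (∫⁻ z, w z ∂ν) ^ r * M := by
  have hslice : ∀ x, Measurable fun z => h z x := fun x => hh.comp measurable_prodMk_right
  have hhr : Measurable (uncurry fun z x => h z x ^ r) := hh.pow_const r
  set W := ∫⁻ z, w z ∂ν
  calc ∫⁻ x, (∫⁻ z, w z * h z x ∂ν) ^ r ∂μ
      ≤ ∫⁻ x, W ^ (r - 1) * ∫⁻ z, w z * h z x ^ r ∂ν ∂μ :=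
        lintegral_mono fun x => ENNReal.rpow_lintegral_mul_le hw (hslice x).aemeasurable hr
    _ = W ^ (r - 1) * ∫⁻ z, w z * ∫⁻ x, h z x ^ r ∂μ ∂ν := by
        rw [lintegral_const_mul'' _ ?meas,
          lintegral_lintegral_swap (aemeasurable_uncurry_mul_swap hw hhr)]
        case meas => exact (aemeasurable_uncurry_mul_swap hw hhr).lintegral_prod_right'
        congr 1
        exact lintegral_congr fun z =>
          lintegral_const_mul _ (hhr.comp measurable_prodMk_left)
    _ ≤ W ^ (r - 1) * ∫⁻ z, w z * M ∂ν := by gcongr with z; exact hM z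
    _ = W ^ r * M := by
        rw [lintegral_mul_const'' _ hw, ← mul_assoc]
        congr 1
        conv_rhs => rw [← sub_add_cancel r 1]
        rw [ENNReal.rpow_add_of_nonneg _ _ (by linarith) zero_le_one, ENNReal.rpow_one]

theorem ae_lintegral_mul_le [SFinite μ] [SFinite ν] {w : β → ℝ≥0∞} (hw : AEMeasurable w ν)
    {h : β → α → ℝ≥0∞} (hh : Measurable (uncurry h)) {M : ℝ≥0∞}
    (hM : ∀ z, ∀ᵐ x ∂μ, h z x ≤ M) :
    ∀ᵐ x ∂μ, ∫⁻ z, w z * h z x ∂ν ≤ (∫⁻ z, w z ∂ν) * M := by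
  have hM' : ∀ᵐ x ∂μ, ∀ᵐ z ∂ν, h z x ≤ M :=
    (Measure.ae_ae_comm (p := fun z x => h z x ≤ M)
      (measurableSet_le hh measurable_const)).mp (ae_of_all _ hM)
  filter_upwards [hM'] with x hx
  calc ∫⁻ z, w z * h z x ∂ν ≤ ∫⁻ z, w z * M ∂ν :=
        lintegral_mono_ae (hx.mono fun z hz => by gcongr)
    _ = (∫⁻ z, w z ∂ν) * M := lintegral_mul_const'' _ hw

theorem eLpNorm_lintegral_mul_le [SFinite μ] [SFinite ν] {p : ℝ≥0∞} (hp : 1 ≤ p)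
    {w : β → ℝ≥0∞} (hw : AEMeasurable w ν) {h : β → α → ℝ≥0∞} (hh : Measurable (uncurry h))
    {M : ℝ≥0∞} (hM : ∀ z, eLpNorm (h z) p μ ≤ M) :
    eLpNorm (fun x => ∫⁻ z, w z * h z x ∂ν) p μ ≤ (∫⁻ z, w z ∂ν) * M := by
  rcases eq_or_ne p ∞ with rfl | hp_top
  · rw [eLpNorm_exponent_top]
    refine essSup_le_of_ae_le _ (ae_lintegral_mul_le hw hh fun z => ?_)
    filter_upwards [ae_le_eLpNormEssSup (f := h z) (μ := μ)] with x hx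
    exact hx.trans (hM z)
  · have hp₀ : p ≠ 0 := (zero_lt_one.trans_le hp).ne'
    have hr : 1 ≤ p.toReal := by simpa using ENNReal.toReal_mono hp_top hp
    have hr₀ : 0 < p.toReal := zero_lt_one.trans_le hr
    simp only [eLpNorm_eq_lintegral_rpow_enorm_toReal hp₀ hp_top, enorm_eq_self, one_div] at hM ⊢
    have hM' : ∀ z, ∫⁻ x, h z x ^ p.toReal ∂μ ≤ M ^ p.toReal := fun z => by
      simpa [ENNReal.rpow_inv_rpow hr₀.ne'] using ENNReal.rpow_le_rpow (hM z) hr₀.le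
    calc _ ≤ ((∫⁻ z, w z ∂ν) ^ p.toReal * M ^ p.toReal) ^ p.toReal⁻¹ :=
          ENNReal.rpow_le_rpow (lintegral_rpow_lintegral_mul_le hw hh hr hM') (by positivity)
      _ = (∫⁻ z, w z ∂ν) * M := by
          rw [← ENNReal.mul_rpow_of_nonneg _ _ hr₀.le, ENNReal.rpow_rpow_inv hr₀.ne']

theorem ae_lt_top_of_eLpNorm_ne_top {f : α → ℝ≥0∞} (hf : AEMeasurable f μ) {p : ℝ≥0∞}
    (hp : p ≠ 0) (hfp : eLpNorm f p μ ≠ ∞) : ∀ᵐ x ∂μ, f x < ∞ := by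
  rcases eq_or_ne p ∞ with rfl | hp_top
  · filter_upwards [ae_le_eLpNormEssSup (f := f) (μ := μ)] with x hx
    exact hx.trans_lt (by simpa using hfp.lt_top)
  · have hr₀ : 0 < p.toReal := ENNReal.toReal_pos hp hp_top
    rw [eLpNorm_eq_lintegral_rpow_enorm_toReal hp hp_top] at hfp
    have := ae_lt_top' (hf.pow_const p.toReal) (by simpa [hr₀] using hfp)
    filter_upwards [this] with x hx using (ENNReal.rpow_lt_top_iff_of_pos hr₀).mp hx

end WeightedMinkowski

section KernelOperator

variable {α β 𝕜 E : Type*} [MeasurableSpace α] [MeasurableSpace β] {μ : Measure α}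
  {ν : Measure β} [SFinite μ] [SFinite ν] [NormedField 𝕜] [NormedAddCommGroup E]
  {K : β → 𝕜} {F : β → α → E} {p M : ℝ≥0∞}

theorem eLpNorm_lintegral_enorm_mul_le (hK : AEStronglyMeasurable K ν)
    (hF : StronglyMeasurable (uncurry F)) (hp : 1 ≤ p) (hM : ∀ z, eLpNorm (F z) p μ ≤ M) :
    eLpNorm (fun x => ∫⁻ z, ‖K z‖ₑ * ‖F z x‖ₑ ∂ν) p μ ≤ eLpNorm K 1 ν * M := by
  rw [eLpNorm_one_eq_lintegral_enorm]
  exact eLpNorm_lintegral_mul_le hp hK.enorm hF.enorm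
    fun z => (eLpNorm_enorm (F z)).trans_le (hM z)

theorem ae_integrable_smul_of_eLpNorm_le [NormedSpace 𝕜 E] (hK : Integrable K ν)
    (hF : StronglyMeasurable (uncurry F)) (hp : 1 ≤ p) (hM : ∀ z, eLpNorm (F z) p μ ≤ M)
    (hM_top : M ≠ ∞) : ∀ᵐ x ∂μ, Integrable (fun z => K z • F z x) ν := by
  have hfin : eLpNorm (fun x => ∫⁻ z, ‖K z‖ₑ * ‖F z x‖ₑ ∂ν) p μ ≠ ∞ :=
    ((eLpNorm_lintegral_enorm_mul_le hK.1 hF hp hM).trans_lt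
      (ENNReal.mul_lt_top ((memLp_one_iff_integrable.2 hK).eLpNorm_lt_top) hM_top.lt_top)).ne
  have hmeas := (aemeasurable_uncurry_mul_swap (μ := μ) (h := fun z x => ‖F z x‖ₑ)
    hK.1.enorm hF.enorm).lintegral_prod_right'
  filter_upwards [ae_lt_top_of_eLpNorm_ne_top hmeas (zero_lt_one.trans_le hp).ne' hfin] with x hx
  refine ⟨hK.1.smul (hF.comp_measurable measurable_prodMk_right).aestronglyMeasurable, ?_⟩
  simpa [HasFiniteIntegral, enorm_smul] using hx

theorem memLp_integral_smul_of_eLpNorm_le [NormedSpace 𝕜 E] [NormedSpace ℝ E]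
    (hK : Integrable K ν) (hF : StronglyMeasurable (uncurry F)) (hp : 1 ≤ p)
    (hM : ∀ z, eLpNorm (F z) p μ ≤ M) (hM_top : M ≠ ∞) :
    MemLp (fun x => ∫ z, K z • F z x ∂ν) p μ ∧
      eLpNorm (fun x => ∫ z, K z • F z x ∂ν) p μ ≤ eLpNorm K 1 ν * M := by
  have hbound : eLpNorm (fun x => ∫ z, K z • F z x ∂ν) p μ ≤ eLpNorm K 1 ν * M := by
    refine (eLpNorm_mono_enorm fun x => ?_).trans (eLpNorm_lintegral_enorm_mul_le hK.1 hF hp hM)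
    simpa [enorm_smul] using enorm_integral_le_lintegral_enorm (fun z => K z • F z x)
  have hmeas : AEStronglyMeasurable (fun q : α × β => K q.2 • F q.2 q.1) (μ.prod ν) :=
    (hK.1.comp_quasiMeasurePreserving Measure.quasiMeasurePreserving_snd).smul
      (hF.comp_measurable measurable_swap).aestronglyMeasurable
  exact ⟨⟨hmeas.integral_prod_right', hbound.trans_lt
    (ENNReal.mul_lt_top (memLp_one_iff_integrable.2 hK).eLpNorm_lt_top hM_top.lt_top)⟩, hbound⟩

end KernelOperator

theorem integral_prod_prod {α β γ E : Type*} [MeasurableSpace α] [MeasurableSpace β]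
    [MeasurableSpace γ] [NormedAddCommGroup E] [NormedSpace ℝ E] {μ : Measure α} {ν : Measure β}
    {ρ : Measure γ} [SFinite μ] [SFinite ν] [SFinite ρ] {f : α × β × γ → E}
    (hf : Integrable f (μ.prod (ν.prod ρ))) :
    ∫ z, f z ∂μ.prod (ν.prod ρ) = ∫ x, ∫ y, ∫ z, f (x, y, z) ∂ρ ∂ν ∂μ := by
  rw [integral_prod _ hf]
  refine integral_congr_ae ?_
  filter_upwards [hf.prod_right_ae] with x hx using integral_prod _ hx

section Translates

variable {G 𝕜 : Type*} [MeasurableSpace G] [AddCommGroup G] [NormedRing 𝕜]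

def translateProd (f₁ f₂ f₃ : G → 𝕜) (z : G × G × G) (x : G) : 𝕜 :=
  f₁ (x - z.1) * f₂ (x - z.2.1) * f₃ (x - z.2.2)

theorem stronglyMeasurable_translateProd [MeasurableSub₂ G] {f₁ f₂ f₃ : G → 𝕜}
    (hf₁ : StronglyMeasurable f₁) (hf₂ : StronglyMeasurable f₂) (hf₃ : StronglyMeasurable f₃) :
    StronglyMeasurable (uncurry (translateProd f₁ f₂ f₃)) :=
  ((hf₁.comp_measurable (measurable_snd.sub measurable_fst.fst)).mul
    (hf₂.comp_measurable (measurable_snd.sub measurable_fst.snd.fst))).mul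
    (hf₃.comp_measurable (measurable_snd.sub measurable_fst.snd.snd))

theorem eLpNorm_translateProd_le [MeasurableAdd G] {μ : Measure G} [μ.IsAddRightInvariant]
    {f₁ f₂ f₃ : G → 𝕜} (hf₁ : AEStronglyMeasurable f₁ μ) (hf₂ : AEStronglyMeasurable f₂ μ)
    (hf₃ : AEStronglyMeasurable f₃ μ) {p q₁ q₂ q₃ : ℝ≥0∞}
    (hpq : 1 / p = 1 / q₁ + 1 / q₂ + 1 / q₃) (z : G × G × G) :
    eLpNorm (translateProd f₁ f₂ f₃ z) p μ ≤
      eLpNorm f₁ q₁ μ * eLpNorm f₂ q₂ μ * eLpNorm f₃ q₃ μ := by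
  have h₁ := measurePreserving_sub_right μ z.1
  have h₂ := measurePreserving_sub_right μ z.2.1
  have h₃ := measurePreserving_sub_right μ z.2.2
  rw [← eLpNorm_comp_measurePreserving hf₁ h₁, ← eLpNorm_comp_measurePreserving hf₂ h₂,
    ← eLpNorm_comp_measurePreserving hf₃ h₃]
  exact eLpNorm_mul_mul_le_mul_eLpNorm (hf₁.comp_measurePreserving h₁)
    (hf₂.comp_measurePreserving h₂) (hf₃.comp_measurePreserving h₃) hpq

variable [MeasurableAdd G] [MeasurableNeg G] (μ : Measure G) [μ.IsNegInvariant]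
  [μ.IsAddLeftInvariant]

theorem integral_integral_integral_sub_left {E : Type*} [NormedAddCommGroup E]
    [NormedSpace ℝ E] (F : G → G → G → E) (x : G) :
    ∫ x₁, ∫ x₂, ∫ x₃, F (x - x₁) (x - x₂) (x - x₃) ∂μ ∂μ ∂μ =
      ∫ z₁, ∫ z₂, ∫ z₃, F z₁ z₂ z₃ ∂μ ∂μ ∂μ := by
  calc _ = ∫ x₁, ∫ x₂, ∫ z₃, F (x - x₁) (x - x₂) z₃ ∂μ ∂μ ∂μ := by
        simp_rw [integral_sub_left_eq_self (F _ _) μ x]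
    _ = ∫ x₁, ∫ z₂, ∫ z₃, F (x - x₁) z₂ z₃ ∂μ ∂μ ∂μ := by
        congr 1 with x₁
        exact integral_sub_left_eq_self (fun z₂ => ∫ z₃, F (x - x₁) z₂ z₃ ∂μ) μ x
    _ = _ := integral_sub_left_eq_self (fun z₁ => ∫ z₂, ∫ z₃, F z₁ z₂ z₃ ∂μ ∂μ) μ x

theorem integral_kernel_mul_eq_integral_smul_translateProd [SFinite μ] [NormedSpace ℝ 𝕜]
    (K : G × G × G → 𝕜) (f₁ f₂ f₃ : G → 𝕜) (x : G)
    (hx : Integrable (fun z => K z • translateProd f₁ f₂ f₃ z x) (μ.prod (μ.prod μ))) :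
    ∫ x₁, ∫ x₂, ∫ x₃, K (x - x₁, x - x₂, x - x₃) * f₁ x₁ * f₂ x₂ * f₃ x₃ ∂μ ∂μ ∂μ =
      ∫ z, K z • translateProd f₁ f₂ f₃ z x ∂μ.prod (μ.prod μ) := by
  have hsub : ∀ x₁ x₂ x₃, K (x - x₁, x - x₂, x - x₃) * f₁ x₁ * f₂ x₂ * f₃ x₃ =
      K (x - x₁, x - x₂, x - x₃) • translateProd f₁ f₂ f₃ (x - x₁, x - x₂, x - x₃) x := by
    simp [translateProd, mul_assoc]
  simp_rw [hsub]
  rw [integral_integral_integral_sub_left μ (fun z₁ z₂ z₃ =>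
    K (z₁, z₂, z₃) • translateProd f₁ f₂ f₃ (z₁, z₂, z₃) x), integral_prod_prod hx]

end Translates

theorem trilinear_kernel_holder_general
    (K : ℝ × ℝ × ℝ → ℂ) (hK : Integrable K (volume : Measure (ℝ × ℝ × ℝ)))
    (f₁ f₂ f₃ : ℝ → ℂ) (hf₁ : Measurable f₁) (hf₂ : Measurable f₂) (hf₃ : Measurable f₃)
    (p q₁ q₂ q₃ : ℝ≥0∞) (hp : 1 ≤ p)
    (hexp : 1 / p = 1 / q₁ + 1 / q₂ + 1 / q₃)
    (hf₁m : MemLp f₁ q₁ (volume : Measure ℝ))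
    (hf₂m : MemLp f₂ q₂ (volume : Measure ℝ))
    (hf₃m : MemLp f₃ q₃ (volume : Measure ℝ)) :
    MemLp (fun x : ℝ => ∫ x₁ : ℝ, ∫ x₂ : ℝ, ∫ x₃ : ℝ,
        K (x - x₁, x - x₂, x - x₃) * f₁ x₁ * f₂ x₂ * f₃ x₃) p (volume : Measure ℝ) ∧
    eLpNorm (fun x : ℝ => ∫ x₁ : ℝ, ∫ x₂ : ℝ, ∫ x₃ : ℝ,
        K (x - x₁, x - x₂, x - x₃) * f₁ x₁ * f₂ x₂ * f₃ x₃) p (volume : Measure ℝ) ≤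
      eLpNorm K 1 (volume : Measure (ℝ × ℝ × ℝ)) *
        eLpNorm f₁ q₁ (volume : Measure ℝ) * eLpNorm f₂ q₂ (volume : Measure ℝ) *
        eLpNorm f₃ q₃ (volume : Measure ℝ) := by
  have hF := stronglyMeasurable_translateProd hf₁.stronglyMeasurable hf₂.stronglyMeasurable
    hf₃.stronglyMeasurable
  have hM := eLpNorm_translateProd_le (μ := volume) hf₁.aestronglyMeasurable
    hf₂.aestronglyMeasurable hf₃.aestronglyMeasurable hexp
  have hM_top : eLpNorm f₁ q₁ volume * eLpNorm f₂ q₂ volume * eLpNorm f₃ q₃ volume ≠ ∞ :=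
    ENNReal.mul_ne_top (ENNReal.mul_ne_top hf₁m.eLpNorm_ne_top hf₂m.eLpNorm_ne_top)
      hf₃m.eLpNorm_ne_top
  have hT := memLp_integral_smul_of_eLpNorm_le hK hF hp hM hM_top
  have hGT : (fun x : ℝ => ∫ x₁ : ℝ, ∫ x₂ : ℝ, ∫ x₃ : ℝ,
      K (x - x₁, x - x₂, x - x₃) * f₁ x₁ * f₂ x₂ * f₃ x₃) =ᵐ[volume]
      fun x => ∫ z, K z • translateProd f₁ f₂ f₃ z x := by
    filter_upwards [ae_integrable_smul_of_eLpNorm_le hK hF hp hM hM_top] with x hx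
    exact integral_kernel_mul_eq_integral_smul_translateProd volume K f₁ f₂ f₃ x hx
  rw [eLpNorm_congr_ae hGT, mul_assoc, mul_assoc, ← mul_assoc (eLpNorm f₁ q₁ volume)]
  exact ⟨hT.1.ae_eq hGT.symm, hT.2⟩

/-- Trilinear Young/Hölder inequality: the map
    x ↦ ∭ K(x-x₁, x-x₂, x-x₃) f₁(x₁) f₂(x₂) f₃(x₃) dx₁dx₂dx₃ lies in L^p with
    norm at most ‖K‖_{L¹}‖f₁‖_{L^{q₁}}‖f₂‖_{L^{q₂}}‖f₃‖_{L^{q₃}}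
    when 1/p = 1/q₁ + 1/q₂ + 1/q₃. -/
theorem trilinear_kernel_holder
    (K : ℝ × ℝ × ℝ → ℂ) (hK : Integrable K (volume : Measure (ℝ × ℝ × ℝ)))
    (f₁ f₂ f₃ : ℝ → ℂ) (hf₁ : Measurable f₁) (hf₂ : Measurable f₂) (hf₃ : Measurable f₃)
    (p q₁ q₂ q₃ : ℝ≥0∞) (hp : 1 ≤ p) (hq₁ : 1 ≤ q₁) (hq₂ : 1 ≤ q₂) (hq₃ : 1 ≤ q₃)
    (hexp : 1 / p = 1 / q₁ + 1 / q₂ + 1 / q₃)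
    (hf₁m : MemLp f₁ q₁ (volume : Measure ℝ))
    (hf₂m : MemLp f₂ q₂ (volume : Measure ℝ))
    (hf₃m : MemLp f₃ q₃ (volume : Measure ℝ)) :
    MemLp (fun x : ℝ => ∫ x₁ : ℝ, ∫ x₂ : ℝ, ∫ x₃ : ℝ,
        K (x - x₁, x - x₂, x - x₃) * f₁ x₁ * f₂ x₂ * f₃ x₃) p (volume : Measure ℝ) ∧
    eLpNorm (fun x : ℝ => ∫ x₁ : ℝ, ∫ x₂ : ℝ, ∫ x₃ : ℝ,
        K (x - x₁, x - x₂, x - x₃) * f₁ x₁ * f₂ x₂ * f₃ x₃) p (volume : Measure ℝ) ≤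
      eLpNorm K 1 (volume : Measure (ℝ × ℝ × ℝ)) *
        eLpNorm f₁ q₁ (volume : Measure ℝ) * eLpNorm f₂ q₂ (volume : Measure ℝ) *
        eLpNorm f₃ q₃ (volume : Measure ℝ) :=
  trilinear_kernel_holder_general K hK f₁ f₂ f₃ hf₁ hf₂ hf₃ p q₁ q₂ q₃ hp hexp hf₁m hf₂m hf₃m
end

section
/- Continuity/closing of the bootstrap: suppose E : [0,T] → [0,∞) is continuous, E(0) ≤ ε, and whenever E(t) ≤ ε₁ on [0,t₀] one has E(t₀) ≤ C₁(ε + ε₁² + ε₁³ log(1+t₀)). If ε₁ = 4C₁ε, ε ≤ 1/(16C₁²), and T ≤ e^{κ/ε²} - 1 with κ = 1/(64C₁³), then E(t) ≤ (3/4)ε₁ for all t ∈ [0,T], hence E(t) < ε₁ on [0,T]. -/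
/-- Closing the bootstrap: with ε₁ = 4C₁ε, ε ≤ 1/(16C₁²), κ = 1/(64C₁³), and
    T ≤ e^{κ/ε²} - 1, the bootstrap hypothesis improves the bound to (3/4)ε₁. -/
theorem bootstrap_closes
    (C₁ ε ε₁ κ T : ℝ) (hC₁ : 1 ≤ C₁) (hε : 0 < ε)
    (hε₁ : ε₁ = 4 * C₁ * ε) (hκ : κ = 1 / (64 * C₁ ^ 3))
    (hεsmall : ε ≤ 1 / (16 * C₁ ^ 2)) (hT0 : 0 ≤ T)
    (hT : T ≤ Real.exp (κ / ε ^ 2) - 1)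
    (E : ℝ → ℝ) (hEcont : ContinuousOn E (Set.Icc 0 T))
    (hEpos : ∀ t ∈ Set.Icc (0 : ℝ) T, 0 ≤ E t) (hE0 : E 0 ≤ ε)
    (hboot : ∀ t₀ ∈ Set.Icc (0 : ℝ) T, (∀ t ∈ Set.Icc (0 : ℝ) t₀, E t ≤ ε₁) →
      E t₀ ≤ C₁ * (ε + ε₁ ^ 2 + ε₁ ^ 3 * Real.log (1 + t₀))) :
    ∀ t ∈ Set.Icc (0 : ℝ) T, E t ≤ 3 / 4 * ε₁ ∧ E t < ε₁ := by
  have hC0 : (0:ℝ) < C₁ := lt_of_lt_of_le one_pos hC₁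
  have hε₁pos : 0 < ε₁ := by rw [hε₁]; positivity
  have hBlt : 3/4 * ε₁ < ε₁ := by linarith
  have hεB : ε ≤ 3/4 * ε₁ := by rw [hε₁]; nlinarith
  have h16 : ε * (16 * C₁^2) ≤ 1 := (le_div_iff₀ (by positivity)).mp hεsmall
  have key : ∀ t₀ ∈ Set.Icc (0:ℝ) T, (∀ t ∈ Set.Icc (0:ℝ) t₀, E t ≤ ε₁) →
      E t₀ ≤ 3/4 * ε₁ := by
    intro t₀ ht₀ h
    have h1 := hboot t₀ ht₀ h
    have hlogmono : Real.log (1 + t₀) ≤ Real.log (1 + T) :=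
      Real.log_le_log (by linarith [ht₀.1]) (by linarith [ht₀.2])
    have h2 : Real.log (1 + T) ≤ κ / ε ^ 2 := by
      have h2' : Real.log (1 + T) ≤ Real.log (Real.exp (κ / ε ^ 2)) :=
        Real.log_le_log (by linarith) (by linarith)
      simpa [Real.log_exp] using h2'
    have hL0 : 0 ≤ Real.log (1 + t₀) := Real.log_nonneg (by linarith [ht₀.1])
    have hκε : κ / ε^2 = 1/(64*C₁^3*ε^2) := by rw [hκ]; field_simp
    have hLle : Real.log (1 + t₀) ≤ 1/(64*C₁^3*ε^2) := by
      rw [← hκε]; exact le_trans hlogmono h2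
    have h3 : ε₁^3 * Real.log (1+t₀) ≤ ε := by
      have hmul : ε₁^3 * Real.log (1+t₀) ≤ ε₁^3 * (1/(64*C₁^3*ε^2)) :=
        mul_le_mul_of_nonneg_left hLle (by positivity)
      have heq : (4*C₁*ε)^3 * (1/(64*C₁^3*ε^2)) = ε := by
        field_simp; ring
      rw [hε₁] at hmul ⊢
      linarith [hmul, heq.le, heq.ge]
    have h4 : ε₁^2 ≤ ε := by rw [hε₁]; nlinarith
    have : C₁ * (ε + ε₁ ^ 2 + ε₁ ^ 3 * Real.log (1 + t₀)) ≤ 3 * C₁ * ε := by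
      nlinarith [hC0]
    rw [hε₁]; linarith
  -- continuity argument
  set B := 3/4 * ε₁ with hBdef
  set S : Set ℝ := {t | t ∈ Set.Icc (0:ℝ) T ∧ ∀ s ∈ Set.Icc (0:ℝ) t, E s ≤ B} with hSdef
  have h0S : (0:ℝ) ∈ S := by
    refine ⟨⟨le_refl 0, hT0⟩, fun s hs => ?_⟩
    have : s = 0 := le_antisymm hs.2 hs.1
    rw [this]; exact le_trans hE0 hεB
  have hbdd : BddAbove S := ⟨T, fun t ht => ht.1.2⟩
  set M := sSup S with hMdef
  have hM0 : 0 ≤ M := le_csSup hbdd h0S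
  have hMT : M ≤ T := csSup_le ⟨0, h0S⟩ (fun t ht => ht.1.2)
  have hbelow : ∀ s, 0 ≤ s → s < M → E s ≤ B := by
    intro s hs0 hsM
    obtain ⟨t, htS, hst⟩ := exists_lt_of_lt_csSup ⟨0, h0S⟩ hsM
    exact htS.2 s ⟨hs0, hst.le⟩
  have hEM : E M ≤ B := by
    rcases eq_or_lt_of_le hM0 with h | h
    · rw [← h]; exact le_trans hE0 hεB
    · -- 0 < M, use continuity from the left
      have hcont : ContinuousWithinAt E (Set.Ico 0 M) M := by
        refine (hEcont M ⟨hM0, hMT⟩).mono ?_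
        intro x hx; exact ⟨hx.1, le_trans hx.2.le hMT⟩
      have hne : (nhdsWithin M (Set.Ico 0 M)).NeBot := by
        rw [← mem_closure_iff_nhdsWithin_neBot, closure_Ico (ne_of_lt h)]
        exact ⟨hM0, le_refl M⟩
      exact le_of_tendsto hcont (Filter.eventually_of_mem self_mem_nhdsWithin
        (fun s hs => hbelow s hs.1 hs.2))
  have hMS : M ∈ S := by
    refine ⟨⟨hM0, hMT⟩, fun s hs => ?_⟩
    rcases eq_or_lt_of_le hs.2 with h | h
    · rw [h]; exact hEM
    · exact hbelow s hs.1 h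
  have hMeqT : M = T := by
    by_contra hne
    have hMT' : M < T := lt_of_le_of_ne hMT hne
    -- E M < ε₁, find δ
    have hEMlt : E M < ε₁ := lt_of_le_of_lt hEM hBlt
    have hcont : ContinuousWithinAt E (Set.Icc 0 T) M := hEcont M ⟨hM0, hMT⟩
    have hev : ∀ᶠ t in nhdsWithin M (Set.Icc 0 T), E t < ε₁ :=
      hcont.eventually_lt_const hEMlt
    rw [eventually_nhdsWithin_iff] at hev
    obtain ⟨δ, hδ0, hδ⟩ := Metric.eventually_nhds_iff.mp hev
    set t' := min (M + δ/2) T with ht'def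
    have ht'M : M < t' := lt_min (by linarith) hMT'
    have ht'T : t' ≤ T := min_le_right _ _
    have ht'0 : 0 ≤ t' := le_trans hM0 ht'M.le
    have hall : ∀ s ∈ Set.Icc (0:ℝ) t', E s ≤ ε₁ := by
      intro s hs
      rcases le_or_gt s M with h | h
      · exact le_trans (hMS.2 s ⟨hs.1, h⟩) hBlt.le
      · have hdist : dist s M < δ := by
          rw [Real.dist_eq, abs_of_nonneg (by linarith)]
          have : s ≤ M + δ/2 := le_trans hs.2 (min_le_left _ _)
          linarith
        exact (hδ hdist ⟨hs.1, le_trans hs.2 ht'T⟩).le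
    have ht'S : t' ∈ S := by
      refine ⟨⟨ht'0, ht'T⟩, fun s hs => ?_⟩
      exact key s ⟨hs.1, le_trans hs.2 ht'T⟩ (fun u hu => hall u ⟨hu.1, le_trans hu.2 hs.2⟩)
    exact absurd (le_csSup hbdd ht'S) (not_le.mpr ht'M)
  intro t ht
  have : E t ≤ B := hMS.2 t ⟨ht.1, hMeqT ▸ ht.2⟩
  exact ⟨this, lt_of_le_of_lt this hBlt⟩
end
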